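/- Let (X,μ) and (Y,ν) be σ-finite measure spaces and let T : L²(μ) → L²(ν) be a bounded linear operator that is positive (f ≥ 0 a.e. implies T f ≥ 0 a.e.), with Hilbert-space adjoint T*. Suppose there exist exponents p_l, p_r ∈ [1,∞], real parameters ε ∈ [0,1] and s > 0, and a finite constant C with the following property: for all measurable sets F ⊂ X, G ⊂ Y with 0 < μ(F) < ∞ and 0 < ν(G) < ∞ and all α > 0, setting I = ∫_G Tχ_F dν, F' = {x ∈ F : T*χ_G(x) ≥ I/(3μ(F))}, G' = {y ∈ G : Tχ_F(y) ≥ I/(3ν(G))}, T_{GF} f = χ_G·T(χ_F f), and T*_{G'F'} g = χ_{F'}·T*(χ_{G'} g), one has that χ_F·|T*χ_G|^{1/p_l} and χ_{G'}·|Tχ_F|^{1/p_r} lie in L² and ∫_G T_{GF} T*_{G'F'} T_{GF} χ_F dν ≤ C [ α^{-1} (μ(F) ν(G))^{1-ε} + α^s ∫_X |T*χ_G|^{1/p_l} · T*_{G'F'}(|Tχ_F|^{1/p_r}) dμ ]. Then there is a finite constant C', independent of F and G, such that ∫_G Tχ_F dν ≤ C' μ(F)^{1/q_L} ν(G)^{1/q_R}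 for all such F and G, where 1/q_L = (2 − ε + (s p_l')^{-1}) / (3 + (s p_l')^{-1} + (s p_r')^{-1}) and 1/q_R = (2 − ε + (s p_r')^{-1}) / (3 + (s p_l')^{-1} + (s p_r')^{-1}). -/

import Mathlib

open MeasureTheory Set ContinuousLinearMap
open scoped ENNReal NNReal

noncomputable section

/-- The truncation `f ↦ χ_s · f` of an `L²` element, as an `L²` element. -/
def truncLp {α : Type*} [MeasurableSpace α] {μ : Measure α} (s : Set α)
    (hs : MeasurableSet s) (f : Lp ℝ 2 μ) : Lp ℝ 2 μ :=
  MemLp.toLp _ ((Lp.memLp f).indicator hs)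

/-- The indicator function `χ_s` of a set of finite measure as an `L²` element. -/
def chiLp {α : Type*} [MeasurableSpace α] (μ : Measure α) (s : Set α)
    (hs : MeasurableSet s) (hfin : μ s ≠ ⊤) : Lp ℝ 2 μ :=
  indicatorConstLp 2 hs hfin (1 : ℝ)

section Aux

variable {α : Type*} [MeasurableSpace α] {μ : Measure α}

lemma truncLp_coeFn (s : Set α) (hs : MeasurableSet s) (f : Lp ℝ 2 μ) :
    ⇑(truncLp s hs f) =ᵐ[μ] s.indicator ⇑f :=
  MemLp.coeFn_toLp _

lemma chiLp_coeFn (s : Set α) (hs : MeasurableSet s) (hfin : μ s ≠ ⊤) :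
    ⇑(chiLp μ s hs hfin) =ᵐ[μ] s.indicator (fun _ => (1:ℝ)) :=
  indicatorConstLp_coeFn

lemma memL2_mul_integrable {f g : α → ℝ} (hf : MemLp f 2 μ) (hg : MemLp g 2 μ) :
    Integrable (fun x => f x * g x) μ := by
  have h := hg.smul (φ := f) (r := 1) hf
  rw [memLp_one_iff_integrable] at h
  exact h

lemma innerL2_eq (f g : Lp ℝ 2 μ) : (inner ℝ f g : ℝ) = ∫ x, f x * g x ∂μ := by
  rw [L2.inner_def]
  simp [RCLike.inner_apply]
  exact congrArg _ (funext fun x => mul_comm _ _)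

lemma inner_chiLp (s : Set α) (hs : MeasurableSet s) (hfin : μ s ≠ ⊤) (f : Lp ℝ 2 μ) :
    (inner ℝ (chiLp μ s hs hfin) f : ℝ) = ∫ x in s, f x ∂μ := by
  rw [chiLp, L2.inner_indicatorConstLp_eq_setIntegral_inner]
  simp [RCLike.inner_apply]

lemma integrableOn_L2 (f : Lp ℝ 2 μ) {s : Set α} (hfin : μ s ≠ ⊤) :
    IntegrableOn (⇑f) s μ :=
  integrableOn_Lp_of_measure_ne_top f (by norm_num) hfin

lemma integrable_L2_mul (f g : Lp ℝ 2 μ) : Integrable (fun x => f x * g x) μ :=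
  memL2_mul_integrable (Lp.memLp f) (Lp.memLp g)

lemma inner_truncLp_comm (s : Set α) (hs : MeasurableSet s) (f g : Lp ℝ 2 μ) :
    (inner ℝ (truncLp s hs f) g : ℝ) = inner ℝ f (truncLp s hs g) := by
  rw [innerL2_eq, innerL2_eq]
  apply integral_congr_ae
  filter_upwards [truncLp_coeFn s hs f, truncLp_coeFn s hs g] with x h1 h2
  rw [h1, h2]
  by_cases hx : x ∈ s <;> simp [Set.indicator_of_mem, Set.indicator_of_notMem, hx]

lemma nonneg_of_inner_nonneg (u : Lp ℝ 2 μ)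
    (h : ∀ g : Lp ℝ 2 μ, 0 ≤ g → 0 ≤ (inner ℝ u g : ℝ)) : 0 ≤ u := by
  have hneg : (0:Lp ℝ 2 μ) ≤ Lp.negPart u := by
    rw [← Lp.coeFn_nonneg]
    filter_upwards [Lp.coeFn_negPart u] with a ha
    rw [ha]
    simp only [Pi.zero_apply, neg_nonneg]
    exact min_le_right _ _
  have h1 : (0:ℝ) ≤ inner ℝ u (Lp.negPart u) := h _ hneg
  have h3 : ∀ᵐ x ∂μ, u x * (Lp.negPart u) x = -((Lp.negPart u) x * (Lp.negPart u) x) := by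
    filter_upwards [Lp.coeFn_negPart u] with a ha
    rcases le_or_gt 0 (u a) with hge | hlt
    · rw [ha, min_eq_right hge]; ring
    · rw [ha, min_eq_left hlt.le]; ring
  have h4 : (inner ℝ u (Lp.negPart u) : ℝ) = - (inner ℝ (Lp.negPart u) (Lp.negPart u) : ℝ) := by
    rw [innerL2_eq, innerL2_eq, ← integral_neg]
    exact integral_congr_ae h3
  have h5 : (inner ℝ (Lp.negPart u) (Lp.negPart u) : ℝ) = 0 := by
    have hnn := real_inner_self_nonneg (x := Lp.negPart u)
    have := h4 ▸ h1
    linarith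
  have h6 : Lp.negPart u = 0 := by
    have := inner_self_eq_zero (𝕜 := ℝ) (x := Lp.negPart u)
    exact this.mp h5
  rw [← Lp.coeFn_nonneg]
  have h7 := Lp.coeFn_negPart u
  rw [h6] at h7
  filter_upwards [h7, Lp.coeFn_zero ℝ 2 μ] with a ha hz
  have h0 : -(u a ⊓ 0) = 0 := by rw [← ha]; simpa using hz
  simp only [Pi.zero_apply]
  rcases le_total (u a) 0 with hle | hle
  · rw [min_eq_left hle] at h0; linarith
  · exact hle

lemma inner_nonneg_of_nonneg {f g : Lp ℝ 2 μ} (hf : 0 ≤ f) (hg : 0 ≤ g) :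
    0 ≤ (inner ℝ f g : ℝ) := by
  rw [innerL2_eq]
  apply integral_nonneg_of_ae
  rw [← Lp.coeFn_nonneg] at hf hg
  filter_upwards [hf, hg] with a h1 h2
  simpa using mul_nonneg (by simpa using h1) (by simpa using h2)

lemma chiLp_nonneg (s : Set α) (hs : MeasurableSet s) (hfin : μ s ≠ ⊤) :
    (0 : Lp ℝ 2 μ) ≤ chiLp μ s hs hfin := by
  rw [← Lp.coeFn_nonneg]
  filter_upwards [chiLp_coeFn s hs hfin] with x hx
  rw [hx]
  simp only [Pi.zero_apply]
  by_cases h : x ∈ s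
  · rw [indicator_of_mem h]; norm_num
  · rw [indicator_of_notMem h]

end Aux

lemma rpow_le_aux {m h t t' : ℝ} (hm : 0 < m) (hh : m ≤ h) (ht' : 0 ≤ t')
    (htt : t + t' = 1) : h ^ t ≤ m ^ (-t') * h := by
  have hh0 : 0 < h := hm.trans_le hh
  have key : 1 ≤ m ^ (-t') * h ^ t' := by
    rw [Real.rpow_neg hm.le]
    have hle : m ^ t' ≤ h ^ t' := Real.rpow_le_rpow hm.le hh ht'
    have hmt : 0 < m ^ t' := Real.rpow_pos_of_pos hm _
    rw [inv_mul_eq_div, le_div_iff₀ hmt, one_mul]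
    exact hle
  have hht : 0 ≤ h ^ t := (Real.rpow_pos_of_pos hh0 t).le
  calc h ^ t = h ^ t * 1 := (mul_one _).symm
    _ ≤ h ^ t * (m ^ (-t') * h ^ t') := mul_le_mul_of_nonneg_left key hht
    _ = m ^ (-t') * (h ^ t * h ^ t') := by ring
    _ = m ^ (-t') * h := by rw [← Real.rpow_add hh0, htt, Real.rpow_one]

lemma conj_toReal {p p' : ℝ≥0∞} (hp : 1 ≤ p) (hc : p⁻¹ + p'⁻¹ = 1) :
    p⁻¹.toReal + p'⁻¹.toReal = 1 := by
  have h1 : p⁻¹ ≠ ∞ := by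
    simp only [ne_eq, ENNReal.inv_eq_top]
    intro h0
    rw [h0] at hp
    exact absurd hp (by simp)
  have h2 : p'⁻¹ ≠ ∞ := by
    intro h0
    rw [h0] at hc
    simp [ENNReal.add_eq_top] at hc
  rw [← ENNReal.toReal_add h1 h2, hc, ENNReal.toReal_one]

lemma conj_inv_eq (p' : ℝ≥0∞) (s : ℝ) :
    (s * p'.toReal)⁻¹ = s⁻¹ * p'⁻¹.toReal := by
  rw [mul_inv, ENNReal.toReal_inv]

/-- The refined set `F' = {x ∈ F : T*χ_G(x) ≥ I/(3 μ F)}`, where `I = ∫_G Tχ_F dν`. -/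
def leftSet {X Y : Type*} [MeasurableSpace X] [MeasurableSpace Y]
    {μ : Measure X} {ν : Measure Y} (T : Lp ℝ 2 μ →L[ℝ] Lp ℝ 2 ν)
    (F : Set X) (G : Set Y) (hF : MeasurableSet F) (hG : MeasurableSet G)
    (hFfin : μ F ≠ ⊤) (hGfin : ν G ≠ ⊤) : Set X :=
  F ∩ ((⇑((adjoint T) (chiLp ν G hG hGfin))) ⁻¹'
    Ici ((∫ y in G, (T (chiLp μ F hF hFfin)) y ∂ν) / (3 * (μ F).toReal)))

/-- The refined set `G' = {y ∈ G : Tχ_F(y) ≥ I/(3 ν G)}`, where `I = ∫_G Tχ_F dν`. -/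
def rightSet {X Y : Type*} [MeasurableSpace X] [MeasurableSpace Y]
    {μ : Measure X} {ν : Measure Y} (T : Lp ℝ 2 μ →L[ℝ] Lp ℝ 2 ν)
    (F : Set X) (G : Set Y) (hF : MeasurableSet F) (hG : MeasurableSet G)
    (hFfin : μ F ≠ ⊤) (hGfin : ν G ≠ ⊤) : Set Y :=
  G ∩ ((⇑(T (chiLp μ F hF hFfin))) ⁻¹'
    Ici ((∫ y in G, (T (chiLp μ F hF hFfin)) y ∂ν) / (3 * (ν G).toReal)))

lemma leftSet_meas {X Y : Type*} [MeasurableSpace X] [MeasurableSpace Y]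
    {μ : Measure X} {ν : Measure Y} (T : Lp ℝ 2 μ →L[ℝ] Lp ℝ 2 ν)
    (F : Set X) (G : Set Y) (hF : MeasurableSet F) (hG : MeasurableSet G)
    (hFfin : μ F ≠ ⊤) (hGfin : ν G ≠ ⊤) :
    MeasurableSet (leftSet T F G hF hG hFfin hGfin) :=
  hF.inter ((Lp.stronglyMeasurable _).measurable measurableSet_Ici)

lemma rightSet_meas {X Y : Type*} [MeasurableSpace X] [MeasurableSpace Y]
    {μ : Measure X} {ν : Measure Y} (T : Lp ℝ 2 μ →L[ℝ] Lp ℝ 2 ν)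
    (F : Set X) (G : Set Y) (hF : MeasurableSet F) (hG : MeasurableSet G)
    (hFfin : μ F ≠ ⊤) (hGfin : ν G ≠ ⊤) :
    MeasurableSet (rightSet T F G hF hG hFfin hGfin) :=
  hG.inter ((Lp.stronglyMeasurable _).measurable measurableSet_Ici)

set_option maxHeartbeats 2000000 in
/-- restricted weak-type bounds from the Bourgain-trick hypothesis on
the generalized `TT*T` composition. -/
theorem statement9 {X Y : Type*} [MeasurableSpace X] [MeasurableSpace Y]
    (μ : Measure X) (ν : Measure Y) [SigmaFinite μ] [SigmaFinite ν]
    (T : Lp ℝ 2 μ →L[ℝ] Lp ℝ 2 ν)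
    (hpos : ∀ f : Lp ℝ 2 μ, 0 ≤ f → 0 ≤ T f)
    (pl pr pl' pr' : ℝ≥0∞) (hpl : 1 ≤ pl) (hpr : 1 ≤ pr)
    (hplc : pl⁻¹ + pl'⁻¹ = 1) (hprc : pr⁻¹ + pr'⁻¹ = 1)
    (ε : ℝ) (hε : ε ∈ Icc (0 : ℝ) 1) (s : ℝ) (hs : 0 < s) (C : ℝ)
    (hmain : ∀ (F : Set X) (G : Set Y) (hF : MeasurableSet F) (hG : MeasurableSet G),
      0 < μ F → ∀ hFfin : μ F ≠ ⊤, 0 < ν G → ∀ hGfin : ν G ≠ ⊤, ∀ α : ℝ, 0 < α →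
      MemLp (F.indicator fun x =>
          |((adjoint T) (chiLp ν G hG hGfin)) x| ^ pl⁻¹.toReal) 2 μ ∧
      ∃ h2 : MemLp ((rightSet T F G hF hG hFfin hGfin).indicator fun y =>
          |(T (chiLp μ F hF hFfin)) y| ^ pr⁻¹.toReal) 2 ν,
        (∫ y in G,
          (truncLp G hG (T (truncLp F hF
            (truncLp (leftSet T F G hF hG hFfin hGfin)
              (leftSet_meas T F G hF hG hFfin hGfin)
              ((adjoint T)
                (truncLp (rightSet T F G hF hG hFfin hGfin)
                  (rightSet_meas T F G hF hG hFfin hGfin)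
                  (truncLp G hG (T (truncLp F hF (chiLp μ F hF hFfin)))))))))) y ∂ν)
          ≤ C * (α⁻¹ * ((μ F).toReal * (ν G).toReal) ^ (1 - ε)
              + α ^ s * ∫ x,
                  |((adjoint T) (chiLp ν G hG hGfin)) x| ^ pl⁻¹.toReal *
                    (leftSet T F G hF hG hFfin hGfin).indicator
                      (⇑((adjoint T) (MemLp.toLp _ h2))) x ∂μ)) :
    ∃ C' : ℝ, ∀ (F : Set X) (G : Set Y) (hF : MeasurableSet F) (hG : MeasurableSet G),
      0 < μ F → ∀ hFfin : μ F ≠ ⊤, 0 < ν G → ∀ hGfin : ν G ≠ ⊤,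
      (∫ y in G, (T (chiLp μ F hF hFfin)) y ∂ν)
        ≤ C' * (μ F).toReal ^
            ((2 - ε + (s * pl'.toReal)⁻¹) /
              (3 + (s * pl'.toReal)⁻¹ + (s * pr'.toReal)⁻¹)) *
          (ν G).toReal ^
            ((2 - ε + (s * pr'.toReal)⁻¹) /
              (3 + (s * pl'.toReal)⁻¹ + (s * pr'.toReal)⁻¹)) := by
  classical
  -- global constants
  set C₀ : ℝ := |C| + 1 with hC₀def
  have hC₀ : 0 < C₀ := by positivity
  have hCle : C ≤ C₀ := (le_abs_self C).trans (by simp [hC₀def])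
  set L : ℝ := (s * pl'.toReal)⁻¹ with hLdef
  set R : ℝ := (s * pr'.toReal)⁻¹ with hRdef
  set tl : ℝ := pl⁻¹.toReal with htldef
  set tl' : ℝ := pl'⁻¹.toReal with htl'def
  set tr : ℝ := pr⁻¹.toReal with htrdef
  set tr' : ℝ := pr'⁻¹.toReal with htr'def
  have htl : tl + tl' = 1 := conj_toReal hpl hplc
  have htr : tr + tr' = 1 := conj_toReal hpr hprc
  have htl'0 : 0 ≤ tl' := ENNReal.toReal_nonneg
  have htr'0 : 0 ≤ tr' := ENNReal.toReal_nonneg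
  have hL : L = tl' * s⁻¹ := by rw [hLdef, conj_inv_eq, mul_comm]
  have hR : R = tr' * s⁻¹ := by rw [hRdef, conj_inv_eq, mul_comm]
  have hL0 : 0 ≤ L := by rw [hL]; positivity
  have hR0 : 0 ≤ R := by rw [hR]; positivity
  set q : ℝ := 3 + L + R with hqdef
  have hq : 0 < q := by rw [hqdef]; linarith
  set D : ℝ := 27 * (2 * C₀) * (2 * C₀) ^ s⁻¹ * 3 ^ L * 3 ^ R with hDdef
  have hD0 : 0 < D := by
    have h1 : (0:ℝ) < (2 * C₀) ^ s⁻¹ := Real.rpow_pos_of_pos (by linarith) _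
    have h2 : (0:ℝ) < (3:ℝ) ^ L := Real.rpow_pos_of_pos (by norm_num) _
    have h3 : (0:ℝ) < (3:ℝ) ^ R := Real.rpow_pos_of_pos (by norm_num) _
    rw [hDdef]; positivity
  refine ⟨D ^ q⁻¹, ?_⟩
  intro F G hF hG hμF hFfin hνG hGfin
  set a : ℝ := (μ F).toReal with hadef
  set b : ℝ := (ν G).toReal with hbdef
  have ha : 0 < a := ENNReal.toReal_pos hμF.ne' hFfin
  have hb : 0 < b := ENNReal.toReal_pos hνG.ne' hGfin
  set χF := chiLp μ F hF hFfin with hχF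
  set χG := chiLp ν G hG hGfin with hχG
  set φ : Lp ℝ 2 ν := T χF with hφdef
  set ψ : Lp ℝ 2 μ := adjoint T χG with hψdef
  set I : ℝ := ∫ y in G, φ y ∂ν with hIdef
  have hRHS : 0 < D ^ q⁻¹ * a ^ ((2 - ε + L) / q) * b ^ ((2 - ε + R) / q) := by
    have := Real.rpow_pos_of_pos hD0 q⁻¹
    have := Real.rpow_pos_of_pos ha ((2 - ε + L) / q)
    have := Real.rpow_pos_of_pos hb ((2 - ε + R) / q)
    positivity
  rcases le_or_gt I 0 with hI0 | hI0
  · calc (∫ y in G, φ y ∂ν) = I := rfl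
      _ ≤ _ := hI0.trans hRHS.le
  -- Now the real case I > 0
  set mF : ℝ := I / (3 * a) with hmFdef
  set mG : ℝ := I / (3 * b) with hmGdef
  have hmF : 0 < mF := by rw [hmFdef]; positivity
  have hmG : 0 < mG := by rw [hmGdef]; positivity
  set F' := leftSet T F G hF hG hFfin hGfin with hF'def
  set G' := rightSet T F G hF hG hFfin hGfin with hG'def
  have hF'm : MeasurableSet F' := leftSet_meas T F G hF hG hFfin hGfin
  have hG'm : MeasurableSet G' := rightSet_meas T F G hF hG hFfin hGfin
  have hF'sub : F' ⊆ F := inter_subset_left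
  have hG'sub : G' ⊆ G := inter_subset_left
  have hF'fin : μ F' ≠ ⊤ := ne_top_of_le_ne_top hFfin (measure_mono hF'sub)
  have hG'fin : ν G' ≠ ⊤ := ne_top_of_le_ne_top hGfin (measure_mono hG'sub)
  have hmemF' : ∀ x ∈ F', mF ≤ ψ x := by
    intro x hx
    rw [hF'def, leftSet] at hx
    exact hx.2
  have hmemG' : ∀ y ∈ G', mG ≤ φ y := by
    intro y hy
    rw [hG'def, rightSet] at hy
    exact hy.2
  have hnotF' : ∀ x ∈ F \ F', ψ x < mF := by
    intro x hx
    by_contra hc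
    push_neg at hc
    exact hx.2 (by rw [hF'def, leftSet]; exact ⟨hx.1, hc⟩)
  have hnotG' : ∀ y ∈ G \ G', φ y < mG := by
    intro y hy
    by_contra hc
    push_neg at hc
    exact hy.2 (by rw [hG'def, rightSet]; exact ⟨hy.1, hc⟩)
  -- positivity infrastructure
  have hadjnn : ∀ g : Lp ℝ 2 ν, 0 ≤ g → (0 : Lp ℝ 2 μ) ≤ adjoint T g := by
    intro g hg
    apply nonneg_of_inner_nonneg
    intro f hf
    rw [ContinuousLinearMap.adjoint_inner_left]
    exact inner_nonneg_of_nonneg hg (hpos f hf)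
  set ψF' := truncLp F' hF'm ψ with hψF'def
  set φ' := truncLp G' hG'm φ with hφ'def
  have hφ'nn : (0 : Lp ℝ 2 ν) ≤ φ' := by
    rw [← Lp.coeFn_nonneg]
    filter_upwards [truncLp_coeFn G' hG'm φ] with y hy
    rw [hy]
    simp only [Pi.zero_apply]
    by_cases h : y ∈ G'
    · rw [indicator_of_mem h]; exact (hmG.trans_le (hmemG' y h)).le
    · rw [indicator_of_notMem h]
  have hψF'nn : (0 : Lp ℝ 2 μ) ≤ ψF' := by
    rw [← Lp.coeFn_nonneg]
    filter_upwards [truncLp_coeFn F' hF'm ψ] with x hx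
    rw [hx]
    simp only [Pi.zero_apply]
    by_cases h : x ∈ F'
    · rw [indicator_of_mem h]; exact (hmF.trans_le (hmemF' x h)).le
    · rw [indicator_of_notMem h]
  set K : ℝ := inner ℝ (T ψF') φ' with hKdef
  set B : ℝ := mF ^ (-tl') * mG ^ (-tr') with hBdef
  have hB : 0 < B := mul_pos (Real.rpow_pos_of_pos hmF _) (Real.rpow_pos_of_pos hmG _)
  have h2CB : 0 < 2 * C₀ * B := by positivity
  set α₀ : ℝ := (2 * C₀ * B) ^ (-s⁻¹) with hα₀def
  have hα₀ : 0 < α₀ := Real.rpow_pos_of_pos h2CB _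
  obtain ⟨h1, h2, hkey⟩ := hmain F G hF hG hμF hFfin hνG hGfin α₀ hα₀
  -- lower bound for K
  have hKlow : mF * (mG * (I / 3)) ≤ K := by
    have hφGint : IntegrableOn (⇑φ) G ν := integrableOn_L2 φ hGfin
    have hφG'int : IntegrableOn (⇑φ) G' ν := hφGint.mono_set hG'sub
    have hφGdint : IntegrableOn (⇑φ) (G \ G') ν := hφGint.mono_set diff_subset
    have hψFdint : IntegrableOn (⇑ψ) (F \ F') μ := (integrableOn_L2 ψ hFfin).mono_set diff_subset
    have hsplitG : I = (∫ y in G', φ y ∂ν) + ∫ y in G \ G', φ y ∂ν := by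
      have h := setIntegral_union (f := fun y => φ y) (μ := ν) disjoint_sdiff_right
        (hG.diff hG'm) hφG'int hφGdint
      rw [union_diff_cancel hG'sub] at h
      rw [hIdef]
      exact h
    have hGd_le : (∫ y in G \ G', φ y ∂ν) ≤ I / 3 := by
      have hc : IntegrableOn (fun _ => mG) (G \ G') ν := by
        apply (integrableOn_const_iff (by simp)).mpr
        exact Or.inr ((measure_mono diff_subset).trans_lt (lt_top_iff_ne_top.mpr hGfin))
      have h1 : (∫ y in G \ G', φ y ∂ν) ≤ ∫ _ in G \ G', mG ∂ν :=
        setIntegral_mono_on hφGdint hc (hG.diff hG'm) (fun y hy => (hnotG' y hy).le)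
      have h2 : (∫ _ in G \ G', (mG : ℝ) ∂ν) = (ν (G \ G')).toReal * mG := by
        rw [setIntegral_const, smul_eq_mul, measureReal_def]
      have h3 : (ν (G \ G')).toReal ≤ b := ENNReal.toReal_mono hGfin (measure_mono diff_subset)
      have h4 : (ν (G \ G')).toReal * mG ≤ b * mG := mul_le_mul_of_nonneg_right h3 hmG.le
      have h5 : b * mG = I / 3 := by rw [hmGdef]; field_simp
      linarith
    have hFd_le : (∫ x in F \ F', ψ x ∂μ) ≤ I / 3 := by
      have hc : IntegrableOn (fun _ => mF) (F \ F') μ := by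
        apply (integrableOn_const_iff (by simp)).mpr
        exact Or.inr ((measure_mono diff_subset).trans_lt (lt_top_iff_ne_top.mpr hFfin))
      have h1 : (∫ x in F \ F', ψ x ∂μ) ≤ ∫ _ in F \ F', mF ∂μ :=
        setIntegral_mono_on hψFdint hc (hF.diff hF'm) (fun x hx => (hnotF' x hx).le)
      have h2 : (∫ _ in F \ F', (mF : ℝ) ∂μ) = (μ (F \ F')).toReal * mF := by
        rw [setIntegral_const, smul_eq_mul, measureReal_def]
      have h3 : (μ (F \ F')).toReal ≤ a := ENNReal.toReal_mono hFfin (measure_mono diff_subset)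
      have h4 : (μ (F \ F')).toReal * mF ≤ a * mF := mul_le_mul_of_nonneg_right h3 hmF.le
      have h5 : a * mF = I / 3 := by rw [hmFdef]; field_simp
      linarith
    have hFdm : MeasurableSet (F \ F') := hF.diff hF'm
    have hFdfin : μ (F \ F') ≠ ⊤ := ne_top_of_le_ne_top hFfin (measure_mono diff_subset)
    have h3j : (inner ℝ (chiLp ν G' hG'm hG'fin) (T (chiLp μ (F \ F') hFdm hFdfin)) : ℝ) ≤ I / 3 := by
      have hTnn : (0 : Lp ℝ 2 ν) ≤ T (chiLp μ (F \ F') hFdm hFdfin) :=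
        hpos _ (chiLp_nonneg _ _ _)
      have e1 : (inner ℝ (chiLp ν G' hG'm hG'fin) (T (chiLp μ (F \ F') hFdm hFdfin)) : ℝ)
          = ∫ y in G', (T (chiLp μ (F \ F') hFdm hFdfin)) y ∂ν := inner_chiLp _ _ _ _
      have hmono : (∫ y in G', (T (chiLp μ (F \ F') hFdm hFdfin)) y ∂ν)
          ≤ ∫ y in G, (T (chiLp μ (F \ F') hFdm hFdfin)) y ∂ν := by
        apply setIntegral_mono_set (integrableOn_L2 _ hGfin)
        · exact ae_restrict_of_ae ((Lp.coeFn_nonneg _).mpr hTnn)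
        · exact HasSubset.Subset.eventuallyLE hG'sub
      have e2 : (inner ℝ χG (T (chiLp μ (F \ F') hFdm hFdfin)) : ℝ)
          = ∫ y in G, (T (chiLp μ (F \ F') hFdm hFdfin)) y ∂ν := by
        rw [hχG]; exact inner_chiLp _ _ _ _
      have e3 : (inner ℝ χG (T (chiLp μ (F \ F') hFdm hFdfin)) : ℝ)
          = ∫ x in F \ F', ψ x ∂μ := by
        rw [← ContinuousLinearMap.adjoint_inner_left, real_inner_comm]
        exact inner_chiLp _ _ _ _
      linarith
    have hsplitF : χF = chiLp μ F' hF'm hF'fin + chiLp μ (F \ F') hFdm hFdfin := by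
      have e0 : ⇑χF =ᵐ[μ] F.indicator (fun _ => (1:ℝ)) := by
        rw [hχF]; exact chiLp_coeFn F hF hFfin
      apply Lp.ext
      filter_upwards [e0, chiLp_coeFn F' hF'm hF'fin, chiLp_coeFn (F \ F') hFdm hFdfin,
        Lp.coeFn_add (chiLp μ F' hF'm hF'fin) (chiLp μ (F \ F') hFdm hFdfin)] with x e0x e1 e2 e3
      rw [e0x, e3, Pi.add_apply, e1, e2]
      by_cases hx' : x ∈ F'
      · rw [indicator_of_mem hx', indicator_of_mem (hF'sub hx'),
          indicator_of_notMem (fun h : x ∈ F \ F' => h.2 hx')]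
        norm_num
      · by_cases hx : x ∈ F
        · rw [indicator_of_mem hx, indicator_of_notMem hx',
            indicator_of_mem (show x ∈ F \ F' from ⟨hx, hx'⟩)]
          norm_num
        · rw [indicator_of_notMem hx, indicator_of_notMem hx',
            indicator_of_notMem (fun h : x ∈ F \ F' => hx h.1)]
          norm_num
    have hT1 : I / 3 ≤ (inner ℝ (chiLp ν G' hG'm hG'fin) (T (chiLp μ F' hF'm hF'fin)) : ℝ) := by
      have hsum : (inner ℝ (chiLp ν G' hG'm hG'fin) φ : ℝ)
          = inner ℝ (chiLp ν G' hG'm hG'fin) (T (chiLp μ F' hF'm hF'fin))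
            + inner ℝ (chiLp ν G' hG'm hG'fin) (T (chiLp μ (F \ F') hFdm hFdfin)) := by
        rw [hφdef, hsplitF, map_add, inner_add_right]
      have hG'val : (inner ℝ (chiLp ν G' hG'm hG'fin) φ : ℝ) = ∫ y in G', φ y ∂ν :=
        inner_chiLp _ _ _ _
      have h23 : 2 / 3 * I ≤ ∫ y in G', φ y ∂ν := by linarith
      linarith
    have hwnn : (0 : Lp ℝ 2 μ) ≤ adjoint T φ' := hadjnn φ' hφ'nn
    have hK2 : K = ∫ x, ψF' x * (adjoint T φ') x ∂μ := by
      rw [hKdef, ← ContinuousLinearMap.adjoint_inner_right, innerL2_eq]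
    have hstep1 : mF * (inner ℝ (chiLp μ F' hF'm hF'fin) (adjoint T φ') : ℝ) ≤ K := by
      rw [hK2, innerL2_eq, ← integral_const_mul]
      apply integral_mono_of_nonneg
      · filter_upwards [chiLp_coeFn F' hF'm hF'fin, (Lp.coeFn_nonneg _).mpr hwnn] with x e1 h1x
        simp only [Pi.zero_apply] at h1x ⊢
        rw [e1]
        by_cases hx : x ∈ F'
        · rw [indicator_of_mem hx]
          simp only [one_mul]
          exact mul_nonneg hmF.le h1x
        · rw [indicator_of_notMem hx]; simp
      · exact integrable_L2_mul ψF' (adjoint T φ')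
      · filter_upwards [chiLp_coeFn F' hF'm hF'fin, truncLp_coeFn F' hF'm ψ,
          (Lp.coeFn_nonneg _).mpr hwnn] with x e1 e2 h1x
        simp only [Pi.zero_apply] at h1x
        rw [e1, e2]
        by_cases hx : x ∈ F'
        · rw [indicator_of_mem hx, indicator_of_mem hx]
          have hm := hmemF' x hx
          have h' := mul_le_mul_of_nonneg_right hm h1x
          simp only [one_mul]
          linarith
        · rw [indicator_of_notMem hx, indicator_of_notMem hx]; simp
    have hstep2 : mG * (inner ℝ (chiLp ν G' hG'm hG'fin) (T (chiLp μ F' hF'm hF'fin)) : ℝ)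
        ≤ (inner ℝ (chiLp μ F' hF'm hF'fin) (adjoint T φ') : ℝ) := by
      have hTF'nn : (0 : Lp ℝ 2 ν) ≤ T (chiLp μ F' hF'm hF'fin) :=
        hpos _ (chiLp_nonneg _ _ _)
      rw [ContinuousLinearMap.adjoint_inner_right,
        real_inner_comm (T (chiLp μ F' hF'm hF'fin)) (chiLp ν G' hG'm hG'fin),
        innerL2_eq, innerL2_eq, ← integral_const_mul]
      apply integral_mono_of_nonneg
      · filter_upwards [chiLp_coeFn G' hG'm hG'fin, (Lp.coeFn_nonneg _).mpr hTF'nn] with y e1 h1y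
        simp only [Pi.zero_apply] at h1y ⊢
        rw [e1]
        by_cases hy : y ∈ G'
        · rw [indicator_of_mem hy]
          simp only [mul_one]
          exact mul_nonneg hmG.le h1y
        · rw [indicator_of_notMem hy]; simp
      · exact integrable_L2_mul (T (chiLp μ F' hF'm hF'fin)) φ'
      · filter_upwards [chiLp_coeFn G' hG'm hG'fin, truncLp_coeFn G' hG'm φ,
          (Lp.coeFn_nonneg _).mpr hTF'nn] with y e1 e2 h1y
        simp only [Pi.zero_apply] at h1y
        rw [e1, e2]
        by_cases hy : y ∈ G'
        · rw [indicator_of_mem hy, indicator_of_mem hy]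
          have hm := hmemG' y hy
          have h' := mul_le_mul_of_nonneg_left hm h1y
          simp only [mul_one]
          linarith
        · rw [indicator_of_notMem hy, indicator_of_notMem hy]; simp
    calc mF * (mG * (I / 3))
        ≤ mF * (mG * (inner ℝ (chiLp ν G' hG'm hG'fin) (T (chiLp μ F' hF'm hF'fin)) : ℝ)) :=
          mul_le_mul_of_nonneg_left (mul_le_mul_of_nonneg_left hT1 hmG.le) hmF.le
      _ ≤ mF * (inner ℝ (chiLp μ F' hF'm hF'fin) (adjoint T φ') : ℝ) :=
          mul_le_mul_of_nonneg_left hstep2 hmF.le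
      _ ≤ K := hstep1
  -- identify the LHS of hkey with K and the J-term
  set gL := MemLp.toLp _ h2 with hgLdef
  set J : ℝ := ∫ x, |ψ x| ^ tl * F'.indicator (⇑(adjoint T gL)) x ∂μ with hJdef
  have hkey2 : K ≤ C * (α₀⁻¹ * (a * b) ^ (1 - ε) + α₀ ^ s * J) := by
    have hkey' : (∫ y in G,
        (truncLp G hG (T (truncLp F hF
          (truncLp F' hF'm ((adjoint T)
            (truncLp G' hG'm (truncLp G hG (T (truncLp F hF χF))))))))) y ∂ν)
        ≤ C * (α₀⁻¹ * (a * b) ^ (1 - ε) + α₀ ^ s * J) := hkey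
    have eFχ : truncLp F hF χF = χF := by
      have e0 : ⇑χF =ᵐ[μ] F.indicator (fun _ => (1:ℝ)) := by
        rw [hχF]; exact chiLp_coeFn F hF hFfin
      apply Lp.ext
      filter_upwards [truncLp_coeFn F hF χF, e0] with x e1 e2
      rw [e1]
      by_cases hx : x ∈ F
      · rw [indicator_of_mem hx]
      · rw [indicator_of_notMem hx, e2, indicator_of_notMem hx]
    have etrunc : truncLp G' hG'm (truncLp G hG φ) = φ' := by
      rw [hφ'def]
      apply Lp.ext
      filter_upwards [truncLp_coeFn G' hG'm (truncLp G hG φ), truncLp_coeFn G hG φ,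
        truncLp_coeFn G' hG'm φ] with y e1 e2 e3
      rw [e1, e3]
      by_cases hy : y ∈ G'
      · rw [indicator_of_mem hy, indicator_of_mem hy, e2, indicator_of_mem (hG'sub hy)]
      · rw [indicator_of_notMem hy, indicator_of_notMem hy]
    have eFu : truncLp F hF (truncLp F' hF'm (adjoint T φ')) = truncLp F' hF'm (adjoint T φ') := by
      apply Lp.ext
      filter_upwards [truncLp_coeFn F hF (truncLp F' hF'm (adjoint T φ')),
        truncLp_coeFn F' hF'm (adjoint T φ')] with x e1 e2
      rw [e1]
      by_cases hx : x ∈ F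
      · rw [indicator_of_mem hx]
      · rw [indicator_of_notMem hx, e2, indicator_of_notMem (fun h => hx (hF'sub h))]
    have hclean : (∫ y in G,
        (truncLp G hG (T (truncLp F hF
          (truncLp F' hF'm ((adjoint T)
            (truncLp G' hG'm (truncLp G hG (T (truncLp F hF χF))))))))) y ∂ν) = K := by
      rw [eFχ]
      rw [← hφdef]
      rw [etrunc]
      rw [eFu]
      have hsetint : (∫ y in G, (truncLp G hG (T (truncLp F' hF'm (adjoint T φ')))) y ∂ν)
          = ∫ y in G, (T (truncLp F' hF'm (adjoint T φ'))) y ∂ν := by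
        apply setIntegral_congr_ae hG
        filter_upwards [truncLp_coeFn G hG (T (truncLp F' hF'm (adjoint T φ')))] with y e hy
        rw [e, indicator_of_mem hy]
      rw [hsetint]
      have e5 : (∫ y in G, (T (truncLp F' hF'm (adjoint T φ'))) y ∂ν)
          = (inner ℝ χG (T (truncLp F' hF'm (adjoint T φ'))) : ℝ) := by
        rw [hχG]; exact (inner_chiLp _ _ _ _).symm
      rw [e5, ← ContinuousLinearMap.adjoint_inner_left, ← hψdef, ← inner_truncLp_comm,
        ← hψF'def, ContinuousLinearMap.adjoint_inner_right, ← hKdef]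
    rw [hclean] at hkey'
    exact hkey'
  -- J is nonnegative, and J ≤ B * K
  have hv : (0 : Lp ℝ 2 μ) ≤ adjoint T gL := by
    apply hadjnn
    rw [← Lp.coeFn_nonneg]
    filter_upwards [MemLp.coeFn_toLp h2] with y hy
    rw [hgLdef, hy]
    simp only [Pi.zero_apply]
    by_cases h : y ∈ G'
    · rw [indicator_of_mem h]
      positivity
    · rw [indicator_of_notMem h]
  have hJ0 : 0 ≤ J := by
    rw [hJdef]
    apply integral_nonneg_of_ae
    filter_upwards [(Lp.coeFn_nonneg _).mpr hv] with x hx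
    simp only [Pi.zero_apply] at hx
    apply mul_nonneg (Real.rpow_nonneg (abs_nonneg _) _)
    by_cases h : x ∈ F'
    · rw [indicator_of_mem h]; exact hx
    · rw [indicator_of_notMem h]
  have hJle : J ≤ B * K := by
    have hTψnn : (0 : Lp ℝ 2 ν) ≤ T ψF' := hpos _ hψF'nn
    have hgLae : ⇑gL =ᵐ[ν] G'.indicator (fun y => |φ y| ^ tr) := MemLp.coeFn_toLp h2
    have hJ1 : J ≤ mF ^ (-tl') * (inner ℝ (T ψF') gL : ℝ) := by
      have e : (inner ℝ (T ψF') gL : ℝ) = ∫ x, ψF' x * (adjoint T gL) x ∂μ := by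
        rw [← ContinuousLinearMap.adjoint_inner_right, innerL2_eq]
      rw [hJdef, e, ← integral_const_mul]
      apply integral_mono_of_nonneg
      · filter_upwards [(Lp.coeFn_nonneg _).mpr hv] with x hx
        simp only [Pi.zero_apply] at hx ⊢
        apply mul_nonneg (Real.rpow_nonneg (abs_nonneg _) _)
        by_cases h : x ∈ F'
        · rw [indicator_of_mem h]; exact hx
        · rw [indicator_of_notMem h]
      · exact (integrable_L2_mul ψF' (adjoint T gL)).const_mul _
      · filter_upwards [truncLp_coeFn F' hF'm ψ, (Lp.coeFn_nonneg _).mpr hv] with x e2 hvx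
        simp only [Pi.zero_apply] at hvx
        by_cases hx : x ∈ F'
        · rw [indicator_of_mem hx, e2, indicator_of_mem hx]
          have hψx : mF ≤ ψ x := hmemF' x hx
          have habs : |ψ x| ^ tl ≤ mF ^ (-tl') * ψ x := by
            rw [abs_of_pos (hmF.trans_le hψx)]
            exact rpow_le_aux hmF hψx htl'0 htl
          calc |ψ x| ^ tl * (adjoint T gL) x ≤ (mF ^ (-tl') * ψ x) * (adjoint T gL) x :=
              mul_le_mul_of_nonneg_right habs hvx
            _ = mF ^ (-tl') * (ψ x * (adjoint T gL) x) := by ring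
        · rw [indicator_of_notMem hx, e2, indicator_of_notMem hx]
          simp
    have hJ2 : (inner ℝ (T ψF') gL : ℝ) ≤ mG ^ (-tr') * K := by
      rw [innerL2_eq, hKdef, innerL2_eq, ← integral_const_mul]
      apply integral_mono_of_nonneg
      · filter_upwards [(Lp.coeFn_nonneg _).mpr hTψnn, hgLae] with y h1y h2y
        simp only [Pi.zero_apply] at h1y ⊢
        rw [h2y]
        apply mul_nonneg h1y
        by_cases h : y ∈ G'
        · rw [indicator_of_mem h]; positivity
        · rw [indicator_of_notMem h]
      · exact (integrable_L2_mul (T ψF') φ').const_mul _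
      · filter_upwards [(Lp.coeFn_nonneg _).mpr hTψnn, hgLae,
          truncLp_coeFn G' hG'm φ] with y h1y h2y h3y
        simp only [Pi.zero_apply] at h1y
        rw [h2y, h3y]
        by_cases hy : y ∈ G'
        · rw [indicator_of_mem hy, indicator_of_mem hy]
          have hφy : mG ≤ φ y := hmemG' y hy
          have habs : |φ y| ^ tr ≤ mG ^ (-tr') * φ y := by
            rw [abs_of_pos (hmG.trans_le hφy)]
            exact rpow_le_aux hmG hφy htr'0 htr
          calc (T ψF') y * |φ y| ^ tr ≤ (T ψF') y * (mG ^ (-tr') * φ y) :=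
              mul_le_mul_of_nonneg_left habs h1y
            _ = mG ^ (-tr') * ((T ψF') y * φ y) := by ring
        · rw [indicator_of_notMem hy, indicator_of_notMem hy]
          simp
    calc J ≤ mF ^ (-tl') * (inner ℝ (T ψF') gL : ℝ) := hJ1
      _ ≤ mF ^ (-tl') * (mG ^ (-tr') * K) :=
          mul_le_mul_of_nonneg_left hJ2 (Real.rpow_nonneg hmF.le _)
      _ = B * K := by rw [hBdef]; ring
  have hK0 : 0 < K := lt_of_lt_of_le (by positivity) hKlow
  -- Bourgain trick: choice of α₀ absorbs the second term
  have hαs : α₀ ^ s = (2 * C₀ * B)⁻¹ := by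
    rw [hα₀def, ← Real.rpow_mul h2CB.le, neg_mul, inv_mul_cancel₀ hs.ne', Real.rpow_neg_one]
  have hαinv : α₀⁻¹ = (2 * C₀ * B) ^ s⁻¹ := by
    rw [hα₀def, Real.rpow_neg h2CB.le, inv_inv]
  have hP : (0:ℝ) < (a * b) ^ (1 - ε) := Real.rpow_pos_of_pos (by positivity) _
  have hkey3 : K ≤ C₀ * (α₀⁻¹ * (a * b) ^ (1 - ε)) + C₀ * (α₀ ^ s * J) := by
    have hE : 0 ≤ α₀⁻¹ * (a * b) ^ (1 - ε) + α₀ ^ s * J := by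
      have := Real.rpow_pos_of_pos hα₀ s
      positivity
    calc K ≤ C * (α₀⁻¹ * (a * b) ^ (1 - ε) + α₀ ^ s * J) := hkey2
      _ ≤ C₀ * (α₀⁻¹ * (a * b) ^ (1 - ε) + α₀ ^ s * J) := mul_le_mul_of_nonneg_right hCle hE
      _ = _ := by ring
  have hhalf : C₀ * (α₀ ^ s * J) ≤ K / 2 := by
    rw [hαs]
    have h1' : (2 * C₀ * B)⁻¹ * J ≤ (2 * C₀ * B)⁻¹ * (B * K) :=
      mul_le_mul_of_nonneg_left hJle (by positivity)
    calc C₀ * ((2 * C₀ * B)⁻¹ * J) ≤ C₀ * ((2 * C₀ * B)⁻¹ * (B * K)) :=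
          mul_le_mul_of_nonneg_left h1' hC₀.le
      _ = K / 2 := by field_simp
  have hKP : K ≤ 2 * C₀ * ((2 * C₀ * B) ^ s⁻¹ * (a * b) ^ (1 - ε)) := by
    have : K ≤ C₀ * (α₀⁻¹ * (a * b) ^ (1 - ε)) + K / 2 := hkey3.trans (by linarith)
    rw [hαinv] at this
    linarith
  -- final exponent arithmetic
  have hmFL : mF ^ (-L) = 3 ^ L * a ^ L / I ^ L := by
    rw [Real.rpow_neg hmF.le, hmFdef, Real.div_rpow hI0.le (by positivity),
      Real.mul_rpow (by norm_num) ha.le, inv_div]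
  have hmGR : mG ^ (-R) = 3 ^ R * b ^ R / I ^ R := by
    rw [Real.rpow_neg hmG.le, hmGdef, Real.div_rpow hI0.le (by positivity),
      Real.mul_rpow (by norm_num) hb.le, inv_div]
  have hBs : B ^ s⁻¹ = mF ^ (-L) * mG ^ (-R) := by
    rw [hBdef, Real.mul_rpow (Real.rpow_nonneg hmF.le _) (Real.rpow_nonneg hmG.le _),
      ← Real.rpow_mul hmF.le, ← Real.rpow_mul hmG.le, neg_mul, neg_mul, ← hL, ← hR]
  have h2CBs : (2 * C₀ * B) ^ s⁻¹ = (2 * C₀) ^ s⁻¹ * B ^ s⁻¹ :=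
    Real.mul_rpow (by positivity) hB.le
  have hab : (a * b) ^ (1 - ε) = a ^ (1 - ε) * b ^ (1 - ε) := Real.mul_rpow ha.le hb.le
  have hMain : I * I * I / (27 * a * b) ≤
      2 * C₀ * ((2 * C₀) ^ s⁻¹ * ((3 ^ L * a ^ L / I ^ L) * (3 ^ R * b ^ R / I ^ R)) *
        (a ^ (1 - ε) * b ^ (1 - ε))) := by
    have e : mF * (mG * (I / 3)) = I * I * I / (27 * a * b) := by
      rw [hmFdef, hmGdef]; field_simp; ring
    calc I * I * I / (27 * a * b) = mF * (mG * (I / 3)) := e.symm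
      _ ≤ K := hKlow
      _ ≤ 2 * C₀ * ((2 * C₀ * B) ^ s⁻¹ * (a * b) ^ (1 - ε)) := hKP
      _ = _ := by rw [h2CBs, hBs, hmFL, hmGR, hab]
  have hIL : (0:ℝ) < I ^ L := Real.rpow_pos_of_pos hI0 _
  have hIR : (0:ℝ) < I ^ R := Real.rpow_pos_of_pos hI0 _
  have h3L : (0:ℝ) < (3:ℝ) ^ L := Real.rpow_pos_of_pos (by norm_num) _
  have h3R : (0:ℝ) < (3:ℝ) ^ R := Real.rpow_pos_of_pos (by norm_num) _
  have haL : (0:ℝ) < a ^ L := Real.rpow_pos_of_pos ha _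
  have hbR : (0:ℝ) < b ^ R := Real.rpow_pos_of_pos hb _
  have haε : (0:ℝ) < a ^ (1 - ε) := Real.rpow_pos_of_pos ha _
  have hbε : (0:ℝ) < b ^ (1 - ε) := Real.rpow_pos_of_pos hb _
  have eIq : I ^ q = I * I * I * (I ^ L * I ^ R) := by
    rw [hqdef, Real.rpow_add hI0, Real.rpow_add hI0,
      show (3:ℝ) = ((3:ℕ):ℝ) by norm_num, Real.rpow_natCast]
    ring
  have ea : a ^ (2 - ε + L) = a * a ^ (1 - ε) * a ^ L := by
    rw [show (2 - ε + L) = 1 + (1 - ε) + L by ring, Real.rpow_add ha, Real.rpow_add ha,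
      Real.rpow_one]
  have eb : b ^ (2 - ε + R) = b * b ^ (1 - ε) * b ^ R := by
    rw [show (2 - ε + R) = 1 + (1 - ε) + R by ring, Real.rpow_add hb, Real.rpow_add hb,
      Real.rpow_one]
  have hIq : I ^ q ≤ D * (a ^ (2 - ε + L) * b ^ (2 - ε + R)) := by
    rw [eIq, ea, eb, hDdef]
    rw [div_le_iff₀ (by positivity : (0:ℝ) < 27 * a * b)] at hMain
    have h' := mul_le_mul_of_nonneg_right hMain (le_of_lt (mul_pos hIL hIR))
    calc I * I * I * (I ^ L * I ^ R)
        ≤ 2 * C₀ * ((2 * C₀) ^ s⁻¹ * ((3 ^ L * a ^ L / I ^ L) * (3 ^ R * b ^ R / I ^ R)) *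
            (a ^ (1 - ε) * b ^ (1 - ε))) * (27 * a * b) * (I ^ L * I ^ R) := h'
      _ = 27 * (2 * C₀) * (2 * C₀) ^ s⁻¹ * 3 ^ L * 3 ^ R *
            (a * a ^ (1 - ε) * a ^ L * (b * b ^ (1 - ε) * b ^ R)) := by
          field_simp
  have hfin : I ≤ D ^ q⁻¹ * a ^ ((2 - ε + L) / q) * b ^ ((2 - ε + R) / q) := by
    have h1' : I = (I ^ q) ^ q⁻¹ := by
      rw [← Real.rpow_mul hI0.le, mul_inv_cancel₀ hq.ne', Real.rpow_one]
    rw [h1']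
    calc (I ^ q) ^ q⁻¹ ≤ (D * (a ^ (2 - ε + L) * b ^ (2 - ε + R))) ^ q⁻¹ :=
        Real.rpow_le_rpow (Real.rpow_nonneg hI0.le _) hIq (inv_nonneg.mpr hq.le)
      _ = D ^ q⁻¹ * a ^ ((2 - ε + L) / q) * b ^ ((2 - ε + R) / q) := by
        rw [Real.mul_rpow hD0.le (by positivity),
          Real.mul_rpow (Real.rpow_nonneg ha.le _) (Real.rpow_nonneg hb.le _),
          ← Real.rpow_mul ha.le, ← Real.rpow_mul hb.le, div_eq_mul_inv, div_eq_mul_inv]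
        ring
  exact hfin

end
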